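/- arXiv:math/9503203 — 3 statements merged into one kernel-verified Lean document; each statement's English description precedes it below -/
import Mathlib

section
/- Suppose κ > ℵ₂ and θ are regular cardinals with θ > ℵ₀, and ⟨S_α : α ∈ S^θ_κ⟩ is a sequence with S_α ⊆ α cofinal in α, |S_α| = θ, every β ∈ S_α of cofinality > θ, and such that for every club C ⊆ κ, {α ∈ S^θ_κ : ∃β < α, S_α \ β ⊆ C} contains a club intersected with S^θ_κ. Then one can construct a decreasing sequence ⟨E_n : n < ω⟩ of clubs of κ such that E_{n+1} is contained in the set of limit points of E_n, and for every α ∈ E_{n+1} ∩ S^θ_κ, E_n' (the limit points of E_n) contains a final segment of S_α. -/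
open Ordinal Set Cardinal

/-- `C` is a club (closed unbounded) subset of the ordinal `κ`. -/
def IsClubIn (C : Set Ordinal) (κ : Ordinal) : Prop :=
  C ⊆ Set.Iio κ ∧ (∀ β < κ, ∃ γ ∈ C, β < γ) ∧
    (∀ α < κ, α ≠ 0 → (∀ β < α, ∃ γ ∈ C, β < γ ∧ γ < α) → α ∈ C)

/-- `S` is stationary in `κ`: it meets every club of `κ`. -/
def IsStationaryIn (S : Set Ordinal) (κ : Ordinal) : Prop :=
  ∀ C, IsClubIn C κ → (S ∩ C).Nonempty

/-- `S^θ_κ`, the set of ordinals below `κ` of cofinality `θ`. -/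
def cofSet (κ θ : Cardinal) : Set Ordinal :=
  {α | α < κ.ord ∧ α.cof = θ}

/-- `γ` is a limit point of `E`: `E ∩ γ` is unbounded in `γ > 0`. -/
def IsLimitPtOf (E : Set Ordinal) (γ : Ordinal) : Prop :=
  γ ≠ 0 ∧ ∀ β < γ, ∃ δ ∈ E, β < δ ∧ δ < γ

/-!
Since `cof κ > ω`, the supremum of an `ω`-sequence below `κ` stays below `κ`; interleaving
elements of two unbounded sets therefore yields common limit points, which shows that the
limit points of a club and the intersection of two clubs are again clubs. Given a club `F`,
apply the guessing property to the club `F'` of limit points of `F`, and intersect the club it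
returns with `F'`. Iterating this step `ω` times gives the sequence `E n`.
-/

theorem exists_seq_of_forall_exists {α : Type*} {P : α → Prop} {r : α → α → Prop} {a : α}
    (ha : P a) (h : ∀ x, P x → ∃ y, P y ∧ r x y) :
    ∃ f : ℕ → α, (∀ n, P (f n)) ∧ ∀ n, r (f n) (f (n + 1)) := by
  choose! g hgP hgr using h
  have hP : ∀ n, P (g^[n] a) := fun n => by
    induction n with
    | zero => exact ha
    | succ n ih => rw [Function.iterate_succ_apply']; exact hgP _ ih
  exact ⟨fun n => g^[n] a, hP, fun n => by
    simp only [Function.iterate_succ_apply']; exact hgr _ (hP n)⟩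

theorem isLimitPtOf_iSup {A : Set Ordinal} {f : ℕ → Ordinal}
    (hf : ∀ n, ∃ δ ∈ A, f n < δ ∧ δ ≤ f (n + 1)) : IsLimitPtOf A (⨆ n, f n) := by
  have hlt : ∀ n, f n < f (n + 1) := fun n =>
    let ⟨_, _, hnδ, hδn⟩ := hf n
    hnδ.trans_le hδn
  have hle : ∀ n, f n ≤ ⨆ n, f n := Ordinal.le_iSup f
  refine ⟨((hlt 0).trans_le (hle 1)).ne_bot, fun x hx => ?_⟩
  obtain ⟨n, hxn⟩ := Ordinal.lt_iSup_iff.1 hx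
  obtain ⟨δ, hδA, hnδ, hδn⟩ := hf n
  exact ⟨δ, hδA, hxn.trans hnδ, hδn.trans_lt ((hlt (n + 1)).trans_le (hle (n + 2)))⟩

section Club

variable {κ : Ordinal}

theorem exists_isLimitPtOf_of_unbounded (hκ : ℵ₀ < κ.cof) {A B : Set Ordinal}
    (hA : ∀ β < κ, ∃ γ ∈ A, β < γ ∧ γ < κ) (hB : ∀ β < κ, ∃ γ ∈ B, β < γ ∧ γ < κ)
    {β : Ordinal} (hβ : β < κ) :
    ∃ γ < κ, β < γ ∧ IsLimitPtOf A γ ∧ IsLimitPtOf B γ := by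
  choose! a haA hlta haκ using hA
  choose! b hbB hltb hbκ using hB
  set g : Ordinal → Ordinal := fun x => max (a x) (b x)
  have hlt : ∀ n, g^[n] β < κ := fun n => by
    induction n with
    | zero => exact hβ
    | succ n ih => rw [Function.iterate_succ_apply']; exact max_lt (haκ _ ih) (hbκ _ ih)
  have hγκ : ⨆ n, g^[n] β < κ := lift_iSup_lt_of_lt_cof (by simpa using hκ) hlt
  have hA' : IsLimitPtOf A (⨆ n, g^[n] β) := isLimitPtOf_iSup fun n =>
    ⟨a (g^[n] β), haA _ (hlt n), hlta _ (hlt n),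
      by rw [Function.iterate_succ_apply']; exact le_max_left _ _⟩
  have hB' : IsLimitPtOf B (⨆ n, g^[n] β) := isLimitPtOf_iSup fun n =>
    ⟨b (g^[n] β), hbB _ (hlt n), hltb _ (hlt n),
      by rw [Function.iterate_succ_apply']; exact le_max_right _ _⟩
  have hβγ : β < ⨆ n, g^[n] β :=
    (lt_max_of_lt_left (hlta β hβ)).trans_le (Ordinal.le_iSup (fun n => g^[n] β) 1)
  exact ⟨_, hγκ, hβγ, hA', hB'⟩

theorem isClubIn_Iio (hκ : Order.IsSuccLimit κ) : IsClubIn (Iio κ) κ :=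
  ⟨subset_rfl, fun β hβ => ⟨β + 1, hκ.add_one_lt hβ, lt_add_one β⟩, fun _ hα _ _ => hα⟩

namespace IsClubIn

variable {C D E : Set Ordinal}

theorem exists_mem_gt (hE : IsClubIn E κ) {β : Ordinal} (hβ : β < κ) :
    ∃ γ ∈ E, β < γ ∧ γ < κ :=
  let ⟨γ, hγE, hβγ⟩ := hE.2.1 β hβ
  ⟨γ, hγE, hβγ, hE.1 hγE⟩

theorem mem_of_isLimitPtOf (hE : IsClubIn E κ) {γ : Ordinal} (hγ : γ < κ)
    (h : IsLimitPtOf E γ) : γ ∈ E :=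
  hE.2.2 γ hγ h.1 h.2

theorem inter (hκ : ℵ₀ < κ.cof) (hC : IsClubIn C κ) (hD : IsClubIn D κ) :
    IsClubIn (C ∩ D) κ := by
  refine ⟨fun x hx => hC.1 hx.1, fun β hβ => ?_, fun α hα hα0 hcl => ⟨?_, ?_⟩⟩
  · obtain ⟨γ, hγκ, hβγ, hγC, hγD⟩ :=
      exists_isLimitPtOf_of_unbounded hκ (fun _ => hC.exists_mem_gt)
        (fun _ => hD.exists_mem_gt) hβ
    exact ⟨γ, ⟨hC.mem_of_isLimitPtOf hγκ hγC, hD.mem_of_isLimitPtOf hγκ hγD⟩, hβγ⟩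
  · refine hC.2.2 α hα hα0 fun β hβ => ?_
    obtain ⟨γ, hγ, h⟩ := hcl β hβ
    exact ⟨γ, hγ.1, h⟩
  · refine hD.2.2 α hα hα0 fun β hβ => ?_
    obtain ⟨γ, hγ, h⟩ := hcl β hβ
    exact ⟨γ, hγ.2, h⟩

theorem limitPts (hκ : ℵ₀ < κ.cof) (hE : IsClubIn E κ) :
    IsClubIn {γ ∈ Iio κ | IsLimitPtOf E γ} κ := by
  refine ⟨fun x hx => hx.1, fun β hβ => ?_, fun α hα hα0 hcl => ⟨hα, hα0, fun β hβ => ?_⟩⟩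
  · obtain ⟨γ, hγκ, hβγ, hγE, -⟩ :=
      exists_isLimitPtOf_of_unbounded hκ (fun _ => hE.exists_mem_gt)
        (fun _ => hE.exists_mem_gt) hβ
    exact ⟨γ, ⟨hγκ, hγE⟩, hβγ⟩
  · obtain ⟨γ, ⟨-, -, hγE⟩, hβγ, hγα⟩ := hcl β hβ
    obtain ⟨δ, hδE, hβδ, hδγ⟩ := hγE β hβγ
    exact ⟨δ, hδE, hβδ, hδγ.trans hγα⟩

end IsClubIn

theorem exists_isClubIn_subset_limitPts_of_guessing (hκ : ℵ₀ < κ.cof) {T : Set Ordinal}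
    {S : Ordinal → Set Ordinal}
    (hguess : ∀ C, IsClubIn C κ → ∃ D, IsClubIn D κ ∧
      D ∩ T ⊆ {α ∈ T | ∃ β < α, ∀ γ ∈ S α, β ≤ γ → γ ∈ C})
    {F : Set Ordinal} (hF : IsClubIn F κ) :
    ∃ F₂, IsClubIn F₂ κ ∧ F₂ ⊆ {γ | IsLimitPtOf F γ} ∧
      ∀ α ∈ F₂ ∩ T, ∃ β < α, ∀ γ ∈ S α, β ≤ γ → IsLimitPtOf F γ := by
  have hF' := hF.limitPts hκ
  obtain ⟨D, hD, hDguess⟩ := hguess _ hF'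
  refine ⟨D ∩ {γ ∈ Iio κ | IsLimitPtOf F γ}, hD.inter hκ hF', fun γ hγ => hγ.2.2, ?_⟩
  rintro α ⟨⟨hαD, -⟩, hαT⟩
  obtain ⟨-, β, hβα, hβ⟩ := hDguess ⟨hαD, hαT⟩
  exact ⟨β, hβα, fun γ hγ hβγ => (hβ γ hγ hβγ).2⟩

end Club

theorem case_one_club_sequence_general (κ θ : Cardinal.{0}) (hκ : κ.IsRegular)
    (hκ2 : Cardinal.aleph 2 < κ)
    (S : Ordinal.{0} → Set Ordinal.{0})
    (hguess : ∀ C, IsClubIn C κ.ord →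
      ∃ D, IsClubIn D κ.ord ∧
        D ∩ cofSet κ θ ⊆ {α' ∈ cofSet κ θ | ∃ β < α', ∀ γ ∈ S α', β ≤ γ → γ ∈ C}) :
    ∃ E : ℕ → Set Ordinal.{0},
      (∀ n, IsClubIn (E n) κ.ord) ∧
      (∀ n m, n ≤ m → E m ⊆ E n) ∧
      (∀ n, E (n + 1) ⊆ {γ | IsLimitPtOf (E n) γ}) ∧
      (∀ n, ∀ α ∈ E (n + 1) ∩ cofSet κ θ,
        ∃ β < α, ∀ γ ∈ S α, β ≤ γ → IsLimitPtOf (E n) γ) := by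
  have hκω : ℵ₀ < κ := (aleph0_le_aleph 2).trans_lt hκ2
  have hcof : ℵ₀ < κ.ord.cof := by rwa [hκ.cof_ord]
  obtain ⟨E, hclub, hstep⟩ := exists_seq_of_forall_exists (P := (IsClubIn · κ.ord))
    (isClubIn_Iio (isSuccLimit_ord hκω.le))
    fun _ hF => exists_isClubIn_subset_limitPts_of_guessing hcof hguess hF
  have hanti : Antitone E := antitone_nat_of_succ_le fun n _ hx =>
    (hclub n).mem_of_isLimitPtOf ((hclub (n + 1)).1 hx) ((hstep n).1 hx)
  exact ⟨E, hclub, fun _ _ h => hanti h, fun n => (hstep n).1, fun n => (hstep n).2⟩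

/-- Case 1 of the proof of Lemma 3: given a `◊*_club(κ,θ)`-sequence
with `θ` uncountable, one can build a decreasing `ω`-sequence of clubs `E n`, each
`E (n+1)` consisting of limit points of `E n`, such that for `α ∈ E (n+1) ∩ S^θ_κ`
the limit points of `E n` contain a final segment of `S_α`. -/
theorem case_one_club_sequence (κ θ : Cardinal.{0}) (hκ : κ.IsRegular) (hθ : θ.IsRegular)
    (hκ2 : Cardinal.aleph 2 < κ) (hθκ : Order.succ θ < κ) (hθω : Cardinal.aleph0 < θ)
    (S : Ordinal.{0} → Set Ordinal.{0})
    (hsub : ∀ α ∈ cofSet κ θ, S α ⊆ Set.Iio α)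
    (hcof : ∀ α ∈ cofSet κ θ, sSup (S α) = α)
    (hcard : ∀ α ∈ cofSet κ θ, #(S α) = Cardinal.lift.{1} θ)
    (hbig : ∀ α ∈ cofSet κ θ, ∀ β ∈ S α, θ < β.cof)
    (hguess : ∀ C, IsClubIn C κ.ord →
      ∃ D, IsClubIn D κ.ord ∧
        D ∩ cofSet κ θ ⊆ {α' ∈ cofSet κ θ | ∃ β < α', ∀ γ ∈ S α', β ≤ γ → γ ∈ C}) :
    ∃ E : ℕ → Set Ordinal.{0},
      (∀ n, IsClubIn (E n) κ.ord) ∧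
      (∀ n m, n ≤ m → E m ⊆ E n) ∧
      (∀ n, E (n + 1) ⊆ {γ | IsLimitPtOf (E n) γ}) ∧
      (∀ n, ∀ α ∈ E (n + 1) ∩ cofSet κ θ,
        ∃ β < α, ∀ γ ∈ S α, β ≤ γ → IsLimitPtOf (E n) γ) :=
  case_one_club_sequence_general κ θ hκ hκ2 S hguess
end

section
/- Let κ, θ be regular cardinals with θ⁺ < κ, and assume NS^θ_κ is κ⁺-saturated. Suppose S ⊆ S^θ_κ is stationary and ⟨S_α : α ∈ S⟩ is a ◊'_club(S)-sequence, i.e., for every club C ⊆ κ the set N(C) = {α ∈ S : ∃β < α, S_α \ β ⊆ C} is stationary. Then there exists a stationary S* ⊆ S such that for every club C ⊆ κ, the set N(C) ∩ S* contains a club intersected with S*. -/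
open Ordinal Set Cardinal

/-- `NS^θ_κ` is `κ⁺`-saturated: there is no family of `κ⁺` many stationary subsets
of `S^θ_κ` with pairwise nonstationary intersections. -/
def NSRestrictedSaturated (κ θ : Cardinal.{0}) : Prop :=
  ¬ ∃ A : Ordinal.{0} → Set Ordinal.{0},
      (∀ i < (Order.succ κ).ord, A i ⊆ cofSet κ θ ∧ IsStationaryIn (A i) κ.ord) ∧
      (∀ i j, i < (Order.succ κ).ord → j < (Order.succ κ).ord → i ≠ j →
        ¬ IsStationaryIn (A i ∩ A j) κ.ord)

/-!
Suppose no stationary `S* ⊆ S` works. Then every stationary `T ⊆ S` has a club `E(T)` such that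
`T \ N(E(T))` is stationary. For `i < κ⁺` let `D_i` be the diagonal intersection of the clubs
`E(N(D_j))`, `j < i`, listed in order type `κ`; then `D_i ⊆ E(N(D_j))` up to a bounded set.
Since `N` respects inclusion up to bounded sets, the stationary sets
`A_i = N(D_i) \ N(E(N(D_i))) ⊆ S^θ_κ` have pairwise bounded, hence nonstationary, intersections,
contradicting saturation.
-/

section Clubs

variable {ν : Ordinal}

theorem isClubIn_Iio_s6 (hν : Order.IsSuccLimit ν) : IsClubIn (Iio ν) ν :=
  ⟨subset_rfl, fun β hβ => ⟨Order.succ β, hν.succ_lt hβ, Order.lt_succ β⟩, fun _ hα _ _ => hα⟩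

theorem isClubIn_Ioo (hν : Order.IsSuccLimit ν) {γ : Ordinal} (hγ : γ < ν) :
    IsClubIn (Ioo γ ν) ν := by
  refine ⟨fun α h => h.2, fun β hβ => ?_, fun α hα hα0 hcof => ?_⟩
  · exact ⟨Order.succ (max β γ),
      ⟨(le_max_right β γ).trans_lt (Order.lt_succ _), hν.succ_lt (max_lt hβ hγ)⟩,
      (le_max_left β γ).trans_lt (Order.lt_succ _)⟩
  · obtain ⟨c, hc, -, hcα⟩ := hcof 0 (pos_iff_ne_zero.mpr hα0)
    exact ⟨hc.1.trans hcα, hα⟩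

theorem not_isStationaryIn_of_subset_Iic (hν : Order.IsSuccLimit ν) {X : Set Ordinal}
    {γ : Ordinal} (hγ : γ < ν) (hX : X ⊆ Iic γ) : ¬ IsStationaryIn X ν := fun h =>
  let ⟨_, hαX, hα⟩ := h _ (isClubIn_Ioo hν hγ)
  (hX hαX).not_gt hα.1

theorem isStationaryIn_diff_iff {T X : Set Ordinal} :
    IsStationaryIn (T \ X) ν ↔ ∀ D, IsClubIn D ν → ¬ D ∩ T ⊆ X ∩ T := by
  simp only [IsStationaryIn, Set.not_subset]
  refine forall_congr' fun D => imp_congr_right fun _ => ?_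
  constructor
  · rintro ⟨α, ⟨hαT, hαX⟩, hαD⟩
    exact ⟨α, ⟨hαD, hαT⟩, fun h => hαX h.1⟩
  · rintro ⟨α, ⟨hαD, hαT⟩, hαX⟩
    exact ⟨α, ⟨hαT, fun h => hαX ⟨h, hαT⟩⟩, hαD⟩

theorem IsClubIn.iSup_mem {C : Set Ordinal} (hC : IsClubIn C ν) {s : ℕ → Ordinal}
    (hs : Monotone s) (hsν : ⨆ n, s n < ν) {n₀ : ℕ}
    (hCs : ∀ n ≥ n₀, ∃ γ ∈ C, s n < γ ∧ γ < s (n + 1)) : ⨆ n, s n ∈ C := by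
  have hle : ∀ n, s n ≤ ⨆ n, s n := Ordinal.le_iSup s
  obtain ⟨γ, -, hγ, hγs⟩ := hCs n₀ le_rfl
  refine hC.2.2 _ hsν (zero_le.trans_lt (hγ.trans (hγs.trans_le (hle _)))).ne' fun β hβ => ?_
  obtain ⟨n, hn⟩ := Ordinal.lt_iSup_iff.mp hβ
  obtain ⟨γ, hγC, hγ1, hγ2⟩ := hCs (max n n₀) (le_max_right _ _)
  exact ⟨γ, hγC, (hn.trans_le (hs (le_max_left _ _))).trans hγ1, hγ2.trans_le (hle _)⟩

theorem exists_strictMono_iSup_lt (hcof : ℵ₀ < ν.cof) {h : Ordinal → Ordinal}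
    (hh : ∀ δ < ν, h δ < ν) {β : Ordinal} (hβ : β < ν) :
    ∃ s : ℕ → Ordinal, StrictMono s ∧ s 0 = β ∧ (∀ n, h (s n) < s (n + 1)) ∧ ⨆ n, s n < ν := by
  have hν : Order.IsSuccLimit ν := one_lt_cof_iff.mp (one_lt_aleph0.trans hcof)
  let s : ℕ → Ordinal := fun n => Nat.rec β (fun _ x => Order.succ (max (h x) x)) n
  have hs_lt : ∀ n, s n < ν := by
    intro n
    induction n with
    | zero => exact hβ
    | succ n ih => exact hν.succ_lt (max_lt (hh _ ih) ih)
  refine ⟨s, strictMono_nat_of_lt_succ fun n => ?_, rfl, fun n => ?_,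
    lift_iSup_lt_of_lt_cof (by simpa using hcof) hs_lt⟩
  · exact (le_max_right _ _).trans_lt (Order.lt_succ _)
  · exact (le_max_left _ _).trans_lt (Order.lt_succ _)

def diagInter (ν : Ordinal) (f : Ordinal → Set Ordinal) : Set Ordinal :=
  {α | α < ν ∧ ∀ ξ < α, α ∈ f ξ}

theorem isClubIn_diagInter (hcof : ℵ₀ < ν.cof) (hsmall : ∀ δ < ν, δ.card < ν.cof)
    {f : Ordinal → Set Ordinal} (hf : ∀ ξ, IsClubIn (f ξ) ν) : IsClubIn (diagInter ν f) ν := by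
  refine ⟨fun α hα => hα.1, fun β hβ => ?_, fun α hα hα0 hacc =>
    ⟨hα, fun ξ hξ => (hf ξ).2.2 α hα hα0 fun β hβ => ?_⟩⟩
  · set next : Ordinal → Ordinal → Ordinal := fun ξ δ => sInf (f ξ ∩ Ioi δ)
    have hnext : ∀ ξ, ∀ δ < ν, next ξ δ ∈ f ξ ∩ Ioi δ := fun ξ δ hδ =>
      csInf_mem (let ⟨γ, hγ, hδγ⟩ := (hf ξ).2.1 δ hδ; ⟨γ, hγ, hδγ⟩)
    -- `s (n + 1)` exceeds `next ξ (s n)` for all `ξ < s n`, so each `f ξ` with `ξ < sup s`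
    -- meets every interval `(s n, s (n + 1))` from some `n` on.
    obtain ⟨s, hs, rfl, hsh, hsν⟩ := exists_strictMono_iSup_lt hcof
      (h := fun δ => ⨆ ξ : Iio δ, next ξ δ)
      (fun δ hδ => lift_iSup_lt_of_lt_cof (by
        rw [Cardinal.mk_Iio_ordinal, ← lift_cof, Cardinal.lift_lift, Cardinal.lift_lt]
        exact hsmall δ hδ)
        fun ξ => (hf ξ).1 (hnext ξ δ hδ).1) hβ
    have hs_lt : ∀ n, s n < ν := fun n => (Ordinal.le_iSup s n).trans_lt hsν
    refine ⟨⨆ n, s n, ⟨hsν, fun ξ hξ => ?_⟩, (hs Nat.zero_lt_one).trans_le (Ordinal.le_iSup s 1)⟩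
    obtain ⟨n₀, hn₀⟩ := Ordinal.lt_iSup_iff.mp hξ
    refine (hf ξ).iSup_mem hs.monotone hsν (n₀ := n₀) fun n hn =>
      ⟨_, (hnext ξ (s n) (hs_lt n)).1, (hnext ξ (s n) (hs_lt n)).2, ?_⟩
    exact (Ordinal.le_iSup (fun ξ : Iio (s n) => next ξ (s n))
      ⟨ξ, hn₀.trans_le (hs.monotone hn)⟩).trans_lt (hsh n)
  · obtain ⟨c, hc, hc1, hcα⟩ := hacc (max β ξ) (max_lt hβ hξ)
    exact ⟨c, hc.2 ξ ((le_max_right _ _).trans_lt hc1), (le_max_left _ _).trans_lt hc1, hcα⟩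

end Clubs

section Guessing

variable {S : Set Ordinal} {Sseq : Ordinal → Set Ordinal} {C C' : Set Ordinal}

/-- The set `N(C)` of the paper. -/
def guessSet (S : Set Ordinal) (Sseq : Ordinal → Set Ordinal) (C : Set Ordinal) : Set Ordinal :=
  {α ∈ S | ∃ β < α, ∀ γ ∈ Sseq α, β ≤ γ → γ ∈ C}

theorem guessSet_subset : guessSet S Sseq C ⊆ S := fun _ h => h.1

theorem guessSet_diff_Iic_subset {ξ : Ordinal} (h : C \ Iio ξ ⊆ C') :
    guessSet S Sseq C \ Iic ξ ⊆ guessSet S Sseq C' := by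
  rintro α ⟨⟨hαS, β, hβ, hβC⟩, hξα⟩
  rw [mem_Iic, not_le] at hξα
  exact ⟨hαS, max β ξ, max_lt hβ hξα, fun γ hγ hle =>
    h ⟨hβC γ hγ ((le_max_left _ _).trans hle), not_lt.mpr ((le_max_right _ _).trans hle)⟩⟩

theorem not_isStationaryIn_guessSet_diff_inter {ν ξ : Ordinal} (hν : Order.IsSuccLimit ν)
    (hξ : ξ < ν) (h : C \ Iio ξ ⊆ C') (X Y : Set Ordinal) :
    ¬ IsStationaryIn ((guessSet S Sseq C \ X) ∩ (Y \ guessSet S Sseq C')) ν :=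
  not_isStationaryIn_of_subset_Iic hν hξ fun _ ⟨⟨hαC, _⟩, _, hαC'⟩ =>
    not_not.mp fun hα => hαC' (guessSet_diff_Iic_subset h ⟨hαC, hα⟩)

end Guessing

section AlmostDecreasing

variable {ν : Ordinal} {F : Set Ordinal → Set Ordinal} {e : Ordinal → Ordinal → Ordinal}

theorem exists_surjOn_Iio_of_card_le {κ : Cardinal} {i : Ordinal} (hi : i.card ≤ κ) :
    ∃ e : Ordinal → Ordinal, SurjOn e (Iio κ.ord) (Iio i) := by
  have : #(Iio i) ≤ #(Iio κ.ord) := by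
    rw [Cardinal.mk_Iio_ordinal, Cardinal.mk_Iio_ordinal, Cardinal.lift_le, card_ord]
    exact hi
  obtain ⟨emb⟩ := this
  have hinj : Function.Injective fun j : Iio i => (emb j : Ordinal) :=
    Subtype.val_injective.comp emb.injective
  exact ⟨Function.extend (fun j : Iio i => (emb j : Ordinal)) Subtype.val 0,
    fun j hj => ⟨emb ⟨j, hj⟩, (emb _).2, hinj.extend_apply _ _ ⟨j, hj⟩⟩⟩

/-- `e i` should enumerate the ordinals below `i` as `e i ξ`, `ξ < ν`; indices with `e i ξ ≥ i`
contribute the trivial club `Iio ν`. -/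
noncomputable def clubSeq (ν : Ordinal) (F : Set Ordinal → Set Ordinal)
    (e : Ordinal → Ordinal → Ordinal) : Ordinal → Set Ordinal :=
  wellFounded_lt.fix fun i D =>
    diagInter ν fun ξ => if h : e i ξ < i then F (D (e i ξ) h) else Iio ν

theorem clubSeq_eq (i : Ordinal) : clubSeq ν F e i =
    diagInter ν fun ξ => if e i ξ < i then F (clubSeq ν F e (e i ξ)) else Iio ν := by
  rw [clubSeq, WellFounded.fix_eq]
  rfl

theorem isClubIn_clubSeq (hcof : ℵ₀ < ν.cof) (hsmall : ∀ δ < ν, δ.card < ν.cof)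
    (hF : ∀ D, IsClubIn D ν → IsClubIn (F D) ν) (i : Ordinal) : IsClubIn (clubSeq ν F e i) ν := by
  induction i using WellFoundedLT.induction with
  | _ i ih =>
    rw [clubSeq_eq]
    refine isClubIn_diagInter hcof hsmall fun ξ => ?_
    split_ifs with h
    · exact hF _ (ih _ h)
    · exact isClubIn_Iio_s6 (one_lt_cof_iff.mp (one_lt_aleph0.trans hcof))

theorem clubSeq_diff_subset (hν : Order.IsSuccLimit ν) {i j ξ : Ordinal} (hji : j < i)
    (hξ : ξ < ν) (he : e i ξ = j) :
    ∃ ξ' < ν, clubSeq ν F e i \ Iio ξ' ⊆ F (clubSeq ν F e j) := by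
  refine ⟨Order.succ ξ, hν.succ_lt hξ, fun α ⟨hα, hξα⟩ => ?_⟩
  rw [clubSeq_eq] at hα
  simpa [he, hji] using hα.2 ξ (Order.succ_le_iff.mp (not_lt.mp hξα))

theorem exists_almostDecreasing_clubs {κ : Cardinal} (hκ : κ.IsRegular) (hκℵ : ℵ₀ < κ)
    (F : Set Ordinal → Set Ordinal) (hF : ∀ D, IsClubIn D κ.ord → IsClubIn (F D) κ.ord) :
    ∃ D : Ordinal → Set Ordinal, (∀ i, IsClubIn (D i) κ.ord) ∧
      ∀ i < (Order.succ κ).ord, ∀ j < i, ∃ ξ < κ.ord, D i \ Iio ξ ⊆ F (D j) := by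
  have hcof : κ.ord.cof = κ := hκ.cof_ord
  have hcofℵ : ℵ₀ < κ.ord.cof := by rwa [hcof]
  have henum : ∀ i, ∃ e : Ordinal → Ordinal,
      i < (Order.succ κ).ord → SurjOn e (Iio κ.ord) (Iio i) := fun i => by
    by_cases hi : i < (Order.succ κ).ord
    · obtain ⟨e, he⟩ := exists_surjOn_Iio_of_card_le (Order.lt_succ_iff.mp (lt_ord.mp hi))
      exact ⟨e, fun _ => he⟩
    · exact ⟨id, fun h => absurd h hi⟩
  choose e he using henum
  have hsmall : ∀ δ < κ.ord, δ.card < κ.ord.cof := fun δ hδ => by rw [hcof]; exact lt_ord.mp hδ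
  refine ⟨clubSeq κ.ord F e, isClubIn_clubSeq hcofℵ hsmall hF, fun i hi j hji => ?_⟩
  obtain ⟨ξ, hξ, hξj⟩ := he i hi hji
  exact clubSeq_diff_subset (one_lt_cof_iff.mp (one_lt_aleph0.trans hcofℵ)) hji hξ hξj

end AlmostDecreasing

theorem claim_two_one_general (κ θ : Cardinal.{0}) (hκ : κ.IsRegular) (hθ : θ.IsRegular)
    (hθκ : Order.succ θ < κ)
    (hsat : NSRestrictedSaturated κ θ)
    (S : Set Ordinal.{0}) (hS : S ⊆ cofSet κ θ)
    (Sseq : Ordinal.{0} → Set Ordinal.{0})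
    (hguess : ∀ C, IsClubIn C κ.ord →
      IsStationaryIn {α ∈ S | ∃ β < α, ∀ γ ∈ Sseq α, β ≤ γ → γ ∈ C} κ.ord) :
    ∃ Sstar : Set Ordinal.{0}, Sstar ⊆ S ∧ IsStationaryIn Sstar κ.ord ∧
      ∀ C, IsClubIn C κ.ord →
        ∃ D, IsClubIn D κ.ord ∧
          D ∩ Sstar ⊆ {α ∈ S | ∃ β < α, ∀ γ ∈ Sseq α, β ≤ γ → γ ∈ C} ∩ Sstar := by
  have hκℵ : ℵ₀ < κ := hθ.aleph0_le.trans_lt ((Order.lt_succ θ).trans hθκ)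
  have hν : Order.IsSuccLimit κ.ord :=
    one_lt_cof_iff.mp (by rw [hκ.cof_ord]; exact one_lt_aleph0.trans hκℵ)
  by_contra! hcon
  have hE : ∀ T, ∃ E, T ⊆ S → IsStationaryIn T κ.ord →
      IsClubIn E κ.ord ∧ IsStationaryIn (T \ guessSet S Sseq E) κ.ord := fun T => by
    by_cases hT : T ⊆ S ∧ IsStationaryIn T κ.ord
    · obtain ⟨C, hC, hCT⟩ := hcon T hT.1 hT.2
      exact ⟨C, fun _ _ => ⟨hC, isStationaryIn_diff_iff.mpr hCT⟩⟩
    · exact ⟨∅, fun h1 h2 => absurd ⟨h1, h2⟩ hT⟩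
  choose E hE using hE
  have hEN : ∀ D, IsClubIn D κ.ord → IsClubIn (E (guessSet S Sseq D)) κ.ord ∧
      IsStationaryIn (guessSet S Sseq D \ guessSet S Sseq (E (guessSet S Sseq D))) κ.ord :=
    fun D hD => hE _ guessSet_subset (hguess D hD)
  obtain ⟨D, hD, hDsub⟩ := exists_almostDecreasing_clubs hκ hκℵ _ fun D hD => (hEN D hD).1
  refine hsat ⟨fun i => guessSet S Sseq (D i) \ guessSet S Sseq (E (guessSet S Sseq (D i))),
    fun i _ => ⟨fun _ hα => hS hα.1.1, (hEN _ (hD i)).2⟩, fun i j hi hj hij => ?_⟩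
  rcases hij.lt_or_gt with hij | hji
  · obtain ⟨ξ, hξ, h⟩ := hDsub j hj i hij
    rw [inter_comm]
    exact not_isStationaryIn_guessSet_diff_inter hν hξ h _ _
  · obtain ⟨ξ, hξ, h⟩ := hDsub i hi j hji
    exact not_isStationaryIn_guessSet_diff_inter hν hξ h _ _

/-- Claim 2.1: assuming `NS^θ_κ` is `κ⁺`-saturated, every
`◊'_club(S)`-sequence guesses clubs on a club relative to some stationary `S* ⊆ S`. -/
theorem claim_two_one (κ θ : Cardinal.{0}) (hκ : κ.IsRegular) (hθ : θ.IsRegular)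
    (hθκ : Order.succ θ < κ)
    (hsat : NSRestrictedSaturated κ θ)
    (S : Set Ordinal.{0}) (hS : S ⊆ cofSet κ θ) (hSstat : IsStationaryIn S κ.ord)
    (Sseq : Ordinal.{0} → Set Ordinal.{0})
    (hsub : ∀ α ∈ S, Sseq α ⊆ Set.Iio α)
    (hguess : ∀ C, IsClubIn C κ.ord →
      IsStationaryIn {α ∈ S | ∃ β < α, ∀ γ ∈ Sseq α, β ≤ γ → γ ∈ C} κ.ord) :
    ∃ Sstar : Set Ordinal.{0}, Sstar ⊆ S ∧ IsStationaryIn Sstar κ.ord ∧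
      ∀ C, IsClubIn C κ.ord →
        ∃ D, IsClubIn D κ.ord ∧
          D ∩ Sstar ⊆ {α ∈ S | ∃ β < α, ∀ γ ∈ Sseq α, β ≤ γ → γ ∈ C} ∩ Sstar :=
  claim_two_one_general κ θ hκ hθ hθκ hsat S hS Sseq hguess
end

section
/- (Shelah's club guessing) Let κ, θ be regular cardinals with κ > max(θ⁺, ℵ₂). Then for every stationary S ⊆ S^θ_κ, the principle ◊'_club(S) holds: there exists a sequence ⟨S_α : α ∈ S⟩ with S_α ⊆ α cofinal in α, |S_α| ≤ θ, such that for every club C ⊆ κ the set {α ∈ S : ∃β < α, S_α \ β ⊆ C} is stationary in κ. -/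
open Ordinal Set Cardinal

/-!
Fix cofinal sets `B α ⊆ α` of size `cf α = θ`, and attach to every club `E` the candidate
`guessSeq B E`: at accumulation points `α` of `E` it replaces each `γ ∈ B α` by `sup (E ∩ γ)`.
If no candidate works, every club `E` has a club `C E` that it guesses at no point of `S ∩ D E`,
for some club `D E`. Iterate `E ↦ acc E ∩ C E ∩ D E` for `θ⁺` steps, intersecting at limits
(fewer than `cf κ` clubs), and pick `α ∈ S` in the last club. For each `γ ∈ B α` the ordinals
`sup (E_i ∩ γ)` decrease in `i`, so they stabilise, and since `|B α| < cf θ⁺` all of them have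
stabilised by some `i < θ⁺`. Then every nonzero point `sup (E_i ∩ γ) = sup (E_{i+1} ∩ γ)` of
`guessSeq B E_i α` lies in the club `E_{i+1} ⊆ C E_i`, so `C E_i` is guessed at `α ∈ D E_i`.
-/

universe u v

open Filter Order

theorem Ordinal.accPt_principal_iff {α : Ordinal.{u}} {E : Set Ordinal.{u}} :
    AccPt α (𝓟 E) ↔ α ≠ 0 ∧ ∀ β < α, (E ∩ Ioo β α).Nonempty :=
  SuccOrder.accPt_principal.trans (by simp)

section Clubs

variable {k : Ordinal.{u}}

theorem IsClubIn.mem_of_accPt {C : Set Ordinal.{u}} (hC : IsClubIn C k) {α : Ordinal.{u}}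
    (hα : α < k) (h : AccPt α (𝓟 C)) : α ∈ C :=
  hC.2.2 α hα (accPt_principal_iff.1 h).1 (accPt_principal_iff.1 h).2

theorem IsClubIn.nonempty_inter_Ioo {C : Set Ordinal.{u}} (hC : IsClubIn C k) {β : Ordinal.{u}}
    (hβ : β < k) : (C ∩ Ioo β k).Nonempty :=
  (hC.2.1 β hβ).imp fun _ ⟨hγC, hβγ⟩ ↦ ⟨hγC, hβγ, hC.1 hγC⟩

theorem isClubIn_Iio_s8 (hk : IsSuccLimit k) : IsClubIn (Iio k) k :=
  ⟨subset_rfl, fun β hβ ↦ ⟨β + 1, hk.add_one_lt hβ, lt_add_one β⟩, fun _ hα _ _ ↦ hα⟩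

theorem IsClubIn.csSup_mem {C W : Set Ordinal.{u}} (hC : IsClubIn C k) (hWC : W ⊆ C)
    (hW : BddAbove W) (hWk : sSup W < k) (h0 : sSup W ≠ 0) : sSup W ∈ C := by
  by_cases hmem : sSup W ∈ W
  · exact hWC hmem
  have hne : W.Nonempty := by
    by_contra hW'
    simp [not_nonempty_iff_eq_empty.1 hW'] at h0
  refine hC.mem_of_accPt hWk (accPt_principal_iff.2 ⟨h0, fun β hβ ↦ ?_⟩)
  obtain ⟨y, hy, hβy⟩ := exists_lt_of_lt_csSup hne hβ
  exact ⟨y, hWC hy, hβy, (le_csSup hW hy).lt_of_ne fun h ↦ hmem (h ▸ hy)⟩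

theorem exists_accPt_of_forall_nonempty_inter_Ioo (hk : ℵ₀ < k.cof) {ι : Type v} [Nonempty ι]
    (hι : Cardinal.lift.{u} #ι < Cardinal.lift.{v} k.cof) {F : ι → Set Ordinal.{u}}
    (hF : ∀ i, ∀ β < k, (F i ∩ Ioo β k).Nonempty) {β : Ordinal.{u}} (hβ : β < k) :
    ∃ γ ∈ Ioo β k, ∀ i, AccPt γ (𝓟 (F i)) := by
  choose! next hnext using hF
  -- `g b` lies above a chosen element of every `F i` above `b`; `γ` is the `ω`-th iterate of `g`.
  set g : Ordinal.{u} → Ordinal.{u} := fun b ↦ ⨆ i, next i b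
  have hg : ∀ b < k, (∀ i, next i b ≤ g b) ∧ g b < k := fun b hb ↦
    ⟨fun i ↦ le_ciSup ⟨k, by rintro _ ⟨j, rfl⟩; exact (hnext j b hb).2.2.le⟩ i,
      lift_iSup_lt_of_lt_cof (by rwa [← lift_cof]) fun i ↦ (hnext i b hb).2.2⟩
  have hlt_g : ∀ b < k, b < g b := fun b hb ↦
    (hnext (Classical.arbitrary ι) b hb).2.1.trans_le ((hg b hb).1 _)
  have hγ : nfp g β < k := nfp_lt_ord hk (fun b hb ↦ (hg b hb).2) hβ
  have hiter : ∀ n, g^[n] β < g^[n + 1] β := fun n ↦ by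
    rw [Function.iterate_succ_apply']
    exact hlt_g _ ((iterate_le_nfp g β n).trans_lt hγ)
  have hβγ : β < nfp g β := (hiter 0).trans_le (iterate_le_nfp g β 1)
  refine ⟨nfp g β, ⟨hβγ, hγ⟩, fun i ↦ accPt_principal_iff.2 ⟨hβγ.ne_zero, fun δ hδ ↦ ?_⟩⟩
  obtain ⟨n, hn⟩ := lt_nfp_iff.1 hδ
  have hx : g^[n] β < k := (iterate_le_nfp g β n).trans_lt hγ
  refine ⟨next i (g^[n] β), (hnext i _ hx).1, hn.trans (hnext i _ hx).2.1, ?_⟩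
  calc next i (g^[n] β) ≤ g^[n + 1] β := by
        rw [Function.iterate_succ_apply']; exact (hg _ hx).1 i
    _ < g^[n + 2] β := hiter (n + 1)
    _ ≤ nfp g β := iterate_le_nfp g β _

theorem IsClubIn.iInter (hk : ℵ₀ < k.cof) {ι : Type v} [Nonempty ι]
    (hι : Cardinal.lift.{u} #ι < Cardinal.lift.{v} k.cof) {F : ι → Set Ordinal.{u}}
    (hF : ∀ i, IsClubIn (F i) k) : IsClubIn (⋂ i, F i) k := by
  refine ⟨(iInter_subset F (Classical.arbitrary ι)).trans (hF _).1, fun β hβ ↦ ?_,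
    fun α hα hα0 hacc ↦ mem_iInter.2 fun i ↦ (hF i).2.2 α hα hα0 fun β hβ ↦ ?_⟩
  · obtain ⟨γ, ⟨hβγ, hγ⟩, hγF⟩ := exists_accPt_of_forall_nonempty_inter_Ioo hk hι
      (fun i _ ↦ (hF i).nonempty_inter_Ioo) hβ
    exact ⟨γ, mem_iInter.2 fun i ↦ (hF i).mem_of_accPt hγ (hγF i), hβγ⟩
  · obtain ⟨γ, hγ, hβγ⟩ := hacc β hβ
    exact ⟨γ, mem_iInter.1 hγ i, hβγ⟩

theorem IsClubIn.inter_s8 (hk : ℵ₀ < k.cof) {C D : Set Ordinal.{u}} (hC : IsClubIn C k)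
    (hD : IsClubIn D k) : IsClubIn (C ∩ D) k := by
  rw [inter_eq_iInter]
  refine IsClubIn.iInter hk ?_ (Bool.forall_bool.2 ⟨hD, hC⟩)
  simpa using (natCast_lt_aleph0 (n := 2)).trans hk

theorem IsClubIn.sep_accPt (hk : ℵ₀ < k.cof) {E : Set Ordinal.{u}} (hE : IsClubIn E k) :
    IsClubIn {α ∈ E | AccPt α (𝓟 E)} k := by
  refine ⟨fun α hα ↦ hE.1 hα.1, fun β hβ ↦ ?_, fun α hα hα0 hacc ↦ ?_⟩
  · obtain ⟨γ, ⟨hβγ, hγ⟩, hγE⟩ := exists_accPt_of_forall_nonempty_inter_Ioo (ι := Unit) hk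
      (by simpa using one_lt_aleph0.trans hk) (fun _ _ ↦ hE.nonempty_inter_Ioo) hβ
    exact ⟨γ, ⟨hE.mem_of_accPt hγ (hγE ⟨⟩), hγE ⟨⟩⟩, hβγ⟩
  · have hαE : AccPt α (𝓟 E) := accPt_principal_iff.2 ⟨hα0, fun β hβ ↦ by
      obtain ⟨γ, hγ, hβγ, hγα⟩ := hacc β hβ
      obtain ⟨δ, hδ, hβδ, hδγ⟩ := (accPt_principal_iff.1 hγ.2).2 β hβγ
      exact ⟨δ, hδ, hβδ, hδγ.trans hγα⟩⟩
    exact ⟨hE.mem_of_accPt hα hαE, hαE⟩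

end Clubs

noncomputable def iterClubs (k : Ordinal.{u}) (Φ : Set Ordinal.{u} → Set Ordinal.{u})
    (i : Ordinal.{u}) : Set Ordinal.{u} :=
  Ordinal.limitRecOn i (Iio k) (fun _ X ↦ Φ X) fun o _ X ↦ ⋂ j : Iio o, X j j.2

section iterClubs

variable {k : Ordinal.{u}} {Φ : Set Ordinal.{u} → Set Ordinal.{u}}

@[simp]
theorem iterClubs_zero : iterClubs k Φ 0 = Iio k :=
  limitRecOn_zero ..

@[simp]
theorem iterClubs_add_one (i : Ordinal.{u}) : iterClubs k Φ (i + 1) = Φ (iterClubs k Φ i) :=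
  limitRecOn_add_one ..

theorem iterClubs_of_isSuccLimit {i : Ordinal.{u}} (hi : IsSuccLimit i) :
    iterClubs k Φ i = ⋂ j : Iio i, iterClubs k Φ j :=
  limitRecOn_limit _ _ _ _ hi

theorem antitone_iterClubs (hΦ : ∀ X, Φ X ⊆ X) : Antitone (iterClubs k Φ) := by
  suffices ∀ j i, i ≤ j → iterClubs k Φ j ⊆ iterClubs k Φ i from fun i j hij ↦ this j i hij
  intro j
  induction j using Ordinal.limitRecOn with
  | zero => intro i hi; rw [nonpos_iff_eq_zero.1 hi]
  | add_one j ih =>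
    intro i hi
    rcases hi.eq_or_lt with rfl | hi
    · exact subset_rfl
    · rw [iterClubs_add_one]
      exact (hΦ _).trans (ih i (lt_add_one_iff.1 hi))
  | limit j hj _ =>
    intro i hi
    rcases hi.eq_or_lt with rfl | hi
    · exact subset_rfl
    · rw [iterClubs_of_isSuccLimit hj]
      exact iInter_subset _ (⟨i, hi⟩ : Iio j)

theorem isClubIn_iterClubs (hk : ℵ₀ < k.cof) (hΦ : ∀ X, IsClubIn X k → IsClubIn (Φ X) k)
    {i : Ordinal.{u}} (hi : i.card < k.cof) : IsClubIn (iterClubs k Φ i) k := by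
  induction i using Ordinal.limitRecOn with
  | zero => simpa using isClubIn_Iio_s8 (one_lt_cof_iff.1 (one_lt_aleph0.trans hk))
  | add_one i ih =>
    rw [iterClubs_add_one]
    exact hΦ _ (ih ((card_le_card (lt_add_one i).le).trans_lt hi))
  | limit i hi0 ih =>
    rw [iterClubs_of_isSuccLimit hi0]
    have : Nonempty (Iio i) := ⟨⟨0, hi0.bot_lt⟩⟩
    refine IsClubIn.iInter hk ?_ fun j ↦ ih j j.2 ((card_le_card j.2.le).trans_lt hi)
    rw [Cardinal.mk_Iio_ordinal, Cardinal.lift_lift]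
    exact Cardinal.lift_lt.2 hi

end iterClubs

theorem exists_forall_eq_of_antitoneOn {α β : Type*} [Preorder α] [LinearOrder β]
    [WellFoundedLT β] {f : α → β} {s : Set α} (hf : AntitoneOn f s) (hs : s.Nonempty) :
    ∃ i ∈ s, ∀ j ∈ s, i ≤ j → f j = f i := by
  obtain ⟨_, ⟨i, hi, rfl⟩, hmin⟩ := wellFounded_lt.has_min (f '' s) (hs.image f)
  exact ⟨i, hi, fun j hj hij ↦ (hf hi hj hij).antisymm (not_lt.1 (hmin _ ⟨j, hj, rfl⟩))⟩

theorem exists_lt_forall_eq_of_antitone {ν : Ordinal.{u}} (hν : ν ≠ 0) {ι : Type v}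
    (hι : Cardinal.lift.{u} #ι < Cardinal.lift.{v} ν.cof) {β : Type*} [LinearOrder β]
    [WellFoundedLT β] {f : ι → Ordinal.{u} → β} (hf : ∀ b, Antitone (f b)) :
    ∃ i < ν, ∀ b j, i ≤ j → j < ν → f b j = f b i := by
  choose idx hidx hstable using fun b ↦
    exists_forall_eq_of_antitoneOn ((hf b).antitoneOn (Iio ν)) ⟨0, pos_iff_ne_zero.2 hν⟩
  have hle : ∀ b, idx b ≤ ⨆ b, idx b := le_ciSup ⟨ν, by rintro _ ⟨b, rfl⟩; exact (hidx b).le⟩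
  refine ⟨⨆ b, idx b, lift_iSup_lt_of_lt_cof (by rwa [← lift_cof]) hidx,
    fun b j hj hjν ↦ ?_⟩
  rw [hstable b j hjν ((hle b).trans hj),
    hstable b _ (hj.trans_lt hjν) (hle b)]

theorem exists_cofinal_subset_Iio {α : Ordinal.{u}} (hα : IsSuccLimit α) :
    ∃ B ⊆ Iio α, (∀ β < α, ∃ x ∈ B, β < x) ∧ #B = Cardinal.lift.{u + 1} α.cof := by
  obtain ⟨s, hs, hcard⟩ := Order.exists_cof_eq (Iio α)
  refine ⟨Subtype.val '' s, by rintro _ ⟨x, -, rfl⟩; exact x.2, fun β hβ ↦ ?_, ?_⟩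
  · obtain ⟨x, hx, hβx⟩ := hs ⟨β + 1, hα.add_one_lt hβ⟩
    exact ⟨x, mem_image_of_mem _ hx, add_one_le_iff.1 hβx⟩
  · rw [mk_image_eq Subtype.val_injective, hcard, Ordinal.cof_Iio, lift_cof]

theorem csSup_inter_Iio_le (E : Set Ordinal.{u}) (γ : Ordinal.{u}) : sSup (E ∩ Iio γ) ≤ γ :=
  csSup_le' fun _ hx ↦ hx.2.le

open Classical in
noncomputable def guessSeq (B : Ordinal.{u} → Set Ordinal.{u}) (E : Set Ordinal.{u})
    (α : Ordinal.{u}) : Set Ordinal.{u} :=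
  if AccPt α (𝓟 E) then (fun γ ↦ sSup (E ∩ Iio γ)) '' B α else B α

section guessSeq

variable {B : Ordinal.{u} → Set Ordinal.{u}} {E : Set Ordinal.{u}} {α : Ordinal.{u}}

theorem guessSeq_of_accPt (h : AccPt α (𝓟 E)) :
    guessSeq B E α = (fun γ ↦ sSup (E ∩ Iio γ)) '' B α :=
  if_pos h

theorem guessSeq_of_not_accPt (h : ¬AccPt α (𝓟 E)) : guessSeq B E α = B α :=
  if_neg h

theorem guessSeq_subset_Iio (hB : B α ⊆ Iio α) : guessSeq B E α ⊆ Iio α := by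
  by_cases h : AccPt α (𝓟 E)
  · rw [guessSeq_of_accPt h]
    rintro _ ⟨γ, hγ, rfl⟩
    exact (csSup_inter_Iio_le E γ).trans_lt (hB hγ)
  · rwa [guessSeq_of_not_accPt h]

theorem sSup_guessSeq (hB : B α ⊆ Iio α) (hcof : ∀ β < α, ∃ x ∈ B α, β < x) :
    sSup (guessSeq B E α) = α := by
  have hbdd : BddAbove (guessSeq B E α) := ⟨α, fun x hx ↦ (guessSeq_subset_Iio hB hx).le⟩
  refine (csSup_le' fun x hx ↦ (guessSeq_subset_Iio hB hx).le).antisymm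
    (le_of_forall_lt fun w hw ↦ ?_)
  by_cases h : AccPt α (𝓟 E)
  · obtain ⟨x, hxE, hwx, hxα⟩ := (accPt_principal_iff.1 h).2 w hw
    obtain ⟨γ, hγ, hxγ⟩ := hcof x hxα
    refine lt_csSup_of_lt hbdd (guessSeq_of_accPt h ▸ mem_image_of_mem _ hγ) ?_
    exact hwx.trans_le (le_csSup (bddAbove_Iio.mono inter_subset_right) ⟨hxE, hxγ⟩)
  · obtain ⟨x, hx, hwx⟩ := hcof w hw
    exact lt_csSup_of_lt hbdd (guessSeq_of_not_accPt h ▸ hx) hwx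

theorem mk_guessSeq_le : #(guessSeq B E α) ≤ #(B α) := by
  by_cases h : AccPt α (𝓟 E)
  · rw [guessSeq_of_accPt h]
    exact mk_image_le
  · rw [guessSeq_of_not_accPt h]

theorem mem_of_mem_guessSeq {k : Ordinal.{u}} {X Y : Set Ordinal.{u}} (hY : IsClubIn Y k)
    (hα : AccPt α (𝓟 X)) (hαk : α < k) (hB : B α ⊆ Iio α)
    (hproj : ∀ γ ∈ B α, sSup (Y ∩ Iio γ) = sSup (X ∩ Iio γ)) {x : Ordinal.{u}}
    (hx : x ∈ guessSeq B X α) (hx0 : x ≠ 0) : x ∈ Y := by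
  rw [guessSeq_of_accPt hα] at hx
  obtain ⟨γ, hγ, rfl⟩ := hx
  dsimp only at hx0 ⊢
  rw [← hproj γ hγ] at hx0 ⊢
  exact hY.csSup_mem inter_subset_left (bddAbove_Iio.mono inter_subset_right)
    ((csSup_inter_Iio_le Y γ).trans_lt ((hB hγ).trans hαk)) hx0

end guessSeq

theorem not_isStationaryIn_iff {T : Set Ordinal.{u}} {k : Ordinal.{u}} :
    ¬IsStationaryIn T k ↔ ∃ D, IsClubIn D k ∧ ∀ α ∈ T, α ∉ D := by
  simp [IsStationaryIn, Set.Nonempty]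

theorem exists_isClubIn_forall_isStationaryIn_guessSeq {k ν : Ordinal.{u}} (hk : ℵ₀ < k.cof)
    (hν : IsSuccLimit ν) (hνk : ν.card < k.cof) {S : Set Ordinal.{u}} (hS : IsStationaryIn S k)
    {B : Ordinal.{u} → Set Ordinal.{u}}
    (hB : ∀ α ∈ S, B α ⊆ Iio α ∧ #(B α) < Cardinal.lift.{u + 1} ν.cof) :
    ∃ E, IsClubIn E k ∧ ∀ C, IsClubIn C k →
      IsStationaryIn {α ∈ S | ∃ β < α, ∀ γ ∈ guessSeq B E α, β ≤ γ → γ ∈ C} k := by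
  by_contra! hfail
  choose! C hC hCfail using hfail
  choose! D hD hDfail using fun E hE ↦ not_isStationaryIn_iff.1 (hCfail E hE)
  set Φ : Set Ordinal.{u} → Set Ordinal.{u} := fun X ↦ {α ∈ X | AccPt α (𝓟 X)} ∩ C X ∩ D X
  set E := iterClubs k Φ
  have hE : ∀ i ≤ ν, IsClubIn (E i) k := fun i hi ↦ isClubIn_iterClubs hk
    (fun X hX ↦ ((hX.sep_accPt hk).inter_s8 hk (hC X hX)).inter_s8 hk (hD X hX))
    ((card_le_card hi).trans_lt hνk)
  have hanti : Antitone E := antitone_iterClubs fun _ _ hx ↦ hx.1.1.1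
  obtain ⟨α, hαS, hαE⟩ := hS _ (hE ν le_rfl)
  obtain ⟨i, hiν, hstab⟩ := exists_lt_forall_eq_of_antitone hν.ne_bot (ι := B α)
    (by rw [Cardinal.lift_id'.{u, u + 1}]; exact (hB α hαS).2) (f := fun γ i ↦ sSup (E i ∩ Iio γ))
    fun γ i j hij ↦ csSup_le_csSup' (bddAbove_Iio.mono inter_subset_right)
      (inter_subset_inter_left _ (hanti hij))
  have hsucc : i + 1 < ν := hν.add_one_lt hiν
  have hEsucc : E (i + 1) = Φ (E i) := iterClubs_add_one i
  have hαi : α ∈ Φ (E i) := hEsucc ▸ hanti hsucc.le hαE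
  refine hDfail (E i) (hE i hiν.le) α ⟨hαS, 1,
    one_lt_of_isSuccLimit hαi.1.1.2.isSuccLimit, fun γ hγ h1γ ↦ ?_⟩ hαi.2
  have hγ : γ ∈ E (i + 1) := mem_of_mem_guessSeq (hE _ hsucc.le) hαi.1.1.2
    ((hE ν le_rfl).1 hαE) (hB α hαS).1 (fun γ hγ ↦ hstab ⟨γ, hγ⟩ _ (lt_add_one i).le hsucc) hγ
    (one_le_iff_ne_zero.1 h1γ)
  exact (hEsucc ▸ hγ).1.2

/-- Proposition 3, Shelah's club guessing: for regular `κ, θ` with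
`κ > max(θ⁺, ℵ₂)`, every stationary `S ⊆ S^θ_κ` carries a `◊'_club(S)`-sequence. -/
theorem club_guessing (κ θ : Cardinal.{0}) (hκ : κ.IsRegular) (hθ : θ.IsRegular)
    (hbig : max (Order.succ θ) (Cardinal.aleph 2) < κ)
    (S : Set Ordinal.{0}) (hS : S ⊆ cofSet κ θ) (hSstat : IsStationaryIn S κ.ord) :
    ∃ Sseq : Ordinal.{0} → Set Ordinal.{0},
      (∀ α ∈ S, Sseq α ⊆ Set.Iio α ∧ sSup (Sseq α) = α ∧
        #(Sseq α) ≤ Cardinal.lift.{1} θ) ∧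
      (∀ C, IsClubIn C κ.ord →
        IsStationaryIn {α ∈ S | ∃ β < α, ∀ γ ∈ Sseq α, β ≤ γ → γ ∈ C} κ.ord) := by
  have hθκ : succ θ < κ := (le_max_left _ _).trans_lt hbig
  have hk : ℵ₀ < κ.ord.cof := by
    rw [hκ.cof_ord]; exact hθ.aleph0_le.trans_lt ((le_succ θ).trans_lt hθκ)
  have hSlim : ∀ α ∈ S, IsSuccLimit α := fun α hα ↦
    one_lt_cof_iff.1 ((hS hα).2 ▸ one_lt_aleph0.trans_le hθ.aleph0_le)
  choose! B hBα hBcof hBcard using fun α hα ↦ exists_cofinal_subset_Iio (hSlim α hα)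
  obtain ⟨E, -, hE⟩ := exists_isClubIn_forall_isStationaryIn_guessSeq hk
    (isSuccLimit_ord (hθ.aleph0_le.trans (le_succ θ))) (by rwa [card_ord, hκ.cof_ord]) hSstat
    (B := B) fun α hα ↦ ⟨hBα α hα, by
      rw [hBcard α hα, (hS hα).2, (isRegular_succ hθ.aleph0_le).cof_ord, Cardinal.lift_lt]
      exact lt_succ θ⟩
  refine ⟨guessSeq B E, fun α hα ↦ ⟨guessSeq_subset_Iio (hBα α hα),
    sSup_guessSeq (hBα α hα) (hBcof α hα), ?_⟩, hE⟩
  rw [← (hS hα).2, ← hBcard α hα]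
  exact mk_guessSeq_le
end
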